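/- arXiv:2310.10936 — 5 statements merged into one kernel-verified Lean document; each statement's English description precedes it below -/
import Mathlib

section
/- For a finite p-group P, the intersection of all powers of the augmentation ideal of the integral group ring ℤ[P] is zero. -/
/-!
Over a ring `k` of characteristic `p` the augmentation ideal of `k[P]` is nilpotent, by induction
on `|P|`: for a central `z ∈ P` of order `p`, the kernel of `k[P] → k[P ⧸ ⟨z⟩]` is generated by
the central element `δ = z - 1`, and `δ ^ p = z ^ p - 1 = 0`. Reducing mod `p`, some power `I ^ n`
of the augmentation ideal of `ℤ[P]` lies in `p ℤ[P]`, so `I ^ (n * j) ⊆ p ^ j ℤ[P]`; and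
`⋂ j, p ^ j ℤ[P] = 0` by Krull's intersection theorem, `ℤ[P]` being a finite free `ℤ`-module.
-/

open Pointwise Subgroup

theorem Subgroup.normal_of_le_center {G : Type*} [Group G] {H : Subgroup G} (h : H ≤ center G) :
    H.Normal where
  conj_mem n hn g := by rwa [mem_center_iff.mp (h hn) g, mul_inv_cancel_right]

theorem IsPGroup.exists_mem_center_orderOf_eq {p : ℕ} [Fact p.Prime] {G : Type*} [Group G]
    [Finite G] [Nontrivial G] (hG : IsPGroup p G) : ∃ z ∈ center G, orderOf z = p := by
  have : Nontrivial (center G) := hG.center_nontrivial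
  obtain ⟨z, hz⟩ := exists_prime_orderOf_dvd_card' (G := center G) p
    ((hG.to_subgroup _).card_eq_or_dvd.resolve_left Finite.one_lt_card.ne')
  exact ⟨z, z.2, by rwa [Subgroup.orderOf_coe]⟩

theorem Ideal.restrictScalars_span_singleton_pow_le {k A : Type*} [CommRing k] [Ring A]
    [Algebra k A] {c : A} (hc : ∀ y, Commute c y) (n : ℕ) :
    (Ideal.span {c}).restrictScalars k ^ n ≤ (Ideal.span {c ^ n}).restrictScalars k := by
  induction n with
  | zero => simp
  | succ n ih =>
    rw [pow_succ]
    refine (mul_le_mul' ih le_rfl).trans (Submodule.mul_le.2 fun x hx y hy => ?_)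
    obtain ⟨a, rfl⟩ := Ideal.mem_span_singleton'.1 hx
    obtain ⟨b, rfl⟩ := Ideal.mem_span_singleton'.1 hy
    refine Ideal.mem_span_singleton'.2 ⟨a * b, ?_⟩
    simp only [pow_succ, mul_assoc, ((hc b).pow_left n).left_comm]

namespace MonoidAlgebra

variable {k k' P Q : Type*}

section CommRing

variable [CommRing k]

variable (k P) in
noncomputable def augmentationIdeal [Monoid P] : Submodule k (MonoidAlgebra k P) :=
  (RingHom.ker (MonoidAlgebra.lift k k P 1 : MonoidAlgebra k P →ₐ[k] k)).restrictScalars k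

theorem mem_augmentationIdeal [Monoid P] {x : MonoidAlgebra k P} :
    x ∈ augmentationIdeal k P ↔ lift k k P 1 x = 0 :=
  Iff.rfl

theorem augmentationIdeal_eq_bot_of_subsingleton [Monoid P] [Subsingleton P] :
    augmentationIdeal k P = ⊥ := by
  refine eq_bot_iff.2 fun x hx => ?_
  have hx_single : x = single 1 (x.coeff 1) := by
    ext b
    rw [Subsingleton.elim b 1]
    simp
  rw [mem_augmentationIdeal, hx_single, lift_single] at hx
  simp only [MonoidHom.one_apply, smul_eq_mul, mul_one] at hx
  rw [hx_single, hx, single_zero]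
  exact zero_mem _

theorem map_augmentationIdeal_pow_le [Monoid P] [Monoid Q] (f : P →* Q) (m : ℕ) :
    (augmentationIdeal k P ^ m).map (mapDomainAlgHom k k f).toLinearMap ≤
      augmentationIdeal k Q ^ m := by
  have hcomp : (lift k k Q 1).comp (mapDomainAlgHom k k f) = lift k k P 1 :=
    algHom_ext (fun _ => by simp) (by ext)
  rw [Submodule.map_pow]
  refine pow_le_pow_left' ?_ m
  rintro _ ⟨x, hx, rfl⟩
  exact (AlgHom.congr_fun hcomp x).trans hx

theorem mapRingHom_mem_augmentationIdeal [CommRing k'] [Monoid P] (f : k →+* k')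
    {x : MonoidAlgebra k P} (hx : x ∈ augmentationIdeal k P) :
    mapRingHom P f x ∈ augmentationIdeal k' P := by
  have hcomm : ∀ y : MonoidAlgebra k P, lift k' k' P 1 (mapRingHom P f y) = f (lift k k P 1 y) := by
    intro y
    induction y using induction_linear with
    | zero => simp
    | add y₁ y₂ h₁ h₂ => simp only [map_add, h₁, h₂]
    | single b r => simp
  rw [mem_augmentationIdeal, hcomm, hx, map_zero]

theorem ker_mapDomainAlgHom_mk'_le [Group P] {N : Subgroup P} [N.Normal]
    {L : Ideal (MonoidAlgebra k P)} (hL : ∀ n ∈ N, of k P n - 1 ∈ L) :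
    RingHom.ker (mapDomainAlgHom k k (QuotientGroup.mk' N)) ≤ L := by
  have hsection : ∀ x : MonoidAlgebra k P,
      x - mapDomain Quotient.out (mapDomainAlgHom k k (QuotientGroup.mk' N) x) ∈ L := by
    intro x
    induction x using induction_linear with
    | zero => simp
    | add x y hx hy =>
      simpa [mapDomain_add, add_sub_add_comm] using L.add_mem hx hy
    | single b r =>
      have hb : (b : P ⧸ N).out⁻¹ * b ∈ N := QuotientGroup.eq.1 (QuotientGroup.out_eq' _)
      have := L.mul_mem_left (single (b : P ⧸ N).out r) (hL _ hb)
      rw [mul_sub, of_apply, single_mul_single, mul_inv_cancel_left, mul_one, mul_one] at this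
      simpa only [mapDomainAlgHom_apply, QuotientGroup.coe_mk', mapDomain_single] using this
  intro x hx
  simpa [RingHom.mem_ker.1 hx] using hsection x

theorem of_sub_one_mem_span_of_mem_zpowers [Group P] {z g : P} (hz : IsOfFinOrder z)
    (hg : g ∈ zpowers z) : of k P g - 1 ∈ Ideal.span {of k P z - 1} := by
  obtain ⟨j, rfl⟩ := hz.mem_powers_iff_mem_zpowers.2 hg
  exact Ideal.mem_span_singleton'.2 ⟨∑ i ∈ Finset.range j, of k P z ^ i, by
    rw [geom_sum_mul, map_pow]⟩

theorem isNilpotent_augmentationIdeal_of_quotient_zpowers {p : ℕ} [Fact p.Prime] [CharP k p]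
    [Group P] {z : P} (hz : z ∈ center P) (hzp : z ^ p = 1) [(zpowers z).Normal]
    (h : IsNilpotent (augmentationIdeal k (P ⧸ zpowers z))) :
    IsNilpotent (augmentationIdeal k P) := by
  obtain ⟨m, hm⟩ := h
  have : CharP (MonoidAlgebra k P) p := charP_of_injective_algebraMap' k p
  set δ := of k P z - 1
  have hδ_central : ∀ y, Commute δ y := fun y =>
    (of_commute (fun g => (mem_center_iff.1 hz g).symm) y).sub_left (Commute.one_left y)
  have hδ_pow : δ ^ p = 0 := by
    rw [sub_pow_char_of_commute p (Commute.one_right _), ← map_pow, hzp, map_one, one_pow, sub_self]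
  have hz_fin : IsOfFinOrder z := isOfFinOrder_iff_pow_eq_one.2 ⟨p, Nat.Prime.pos Fact.out, hzp⟩
  have hm_le : augmentationIdeal k P ^ m ≤ (Ideal.span {δ}).restrictScalars k := by
    intro x hx
    refine ker_mapDomainAlgHom_mk'_le (fun n hn => of_sub_one_mem_span_of_mem_zpowers hz_fin hn) ?_
    have := map_augmentationIdeal_pow_le (QuotientGroup.mk' (zpowers z)) m
      (Submodule.mem_map_of_mem hx)
    rwa [hm, Submodule.zero_eq_bot, Submodule.mem_bot] at this
  refine ⟨m * p, le_bot_iff.1 ?_⟩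
  calc augmentationIdeal k P ^ (m * p)
      ≤ ((Ideal.span {δ}).restrictScalars k) ^ p := by
        rw [pow_mul]
        exact pow_le_pow_left' hm_le p
    _ ≤ (Ideal.span {δ ^ p}).restrictScalars k :=
        Ideal.restrictScalars_span_singleton_pow_le hδ_central p
    _ = ⊥ := by rw [hδ_pow, Ideal.span_singleton_eq_bot.2 rfl, Submodule.restrictScalars_bot]

theorem isNilpotent_augmentationIdeal {p : ℕ} [Fact p.Prime] [CharP k p] [Group P] [Finite P]
    (hP : IsPGroup p P) : IsNilpotent (augmentationIdeal k P) := by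
  induction h : Nat.card P using Nat.strong_induction_on generalizing P with
  | _ n ih =>
  rcases subsingleton_or_nontrivial P with hP₁ | hP₁
  · rw [augmentationIdeal_eq_bot_of_subsingleton]
    exact IsNilpotent.zero
  obtain ⟨z, hz, hzp⟩ := hP.exists_mem_center_orderOf_eq
  have := normal_of_le_center (zpowers_le.2 hz)
  refine isNilpotent_augmentationIdeal_of_quotient_zpowers hz (hzp ▸ pow_orderOf_eq_one z)
    (ih _ ?_ (hP.to_quotient _) rfl)
  rw [← h, card_eq_card_quotient_mul_card_subgroup (zpowers z), Nat.card_zpowers, hzp]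
  exact lt_mul_of_one_lt_right Nat.card_pos (Nat.Prime.one_lt Fact.out)

end CommRing

theorem mem_smul_top_of_map_intCast_eq_zero {M : Type*} {n : ℕ} {x : MonoidAlgebra ℤ M}
    (hx : map (Int.castAddHom (ZMod n)) x = 0) :
    x ∈ (n : ℤ) • (⊤ : Submodule ℤ (MonoidAlgebra ℤ M)) := by
  have hdvd (m : M) : (n : ℤ) ∣ x.coeff m :=
    (ZMod.intCast_zmod_eq_zero_iff_dvd _ n).1 (by simpa using congr(($hx).coeff m))
  refine (Submodule.mem_smul_pointwise_iff_exists _ _ _).2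
    ⟨.ofCoeff (x.coeff.mapRange (· / (n : ℤ)) (Int.zero_ediv _)), trivial, ?_⟩
  ext m
  simp [Int.mul_ediv_cancel' (hdvd m)]

theorem exists_augmentationIdeal_int_pow_le_smul_top {p : ℕ} [Fact p.Prime] [Group P] [Finite P]
    (hP : IsPGroup p P) : ∃ n, augmentationIdeal ℤ P ^ n ≤ (p : ℤ) • ⊤ := by
  obtain ⟨n, hn⟩ := isNilpotent_augmentationIdeal (k := ZMod p) hP
  let ρ := (mapRingHom P (Int.castRingHom (ZMod p))).toIntAlgHom
  have hρ : (augmentationIdeal ℤ P).map ρ.toLinearMap ≤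
      (augmentationIdeal (ZMod p) P).restrictScalars ℤ := by
    rintro _ ⟨x, hx, rfl⟩
    exact mapRingHom_mem_augmentationIdeal _ hx
  refine ⟨n + 1, fun x hx => mem_smul_top_of_map_intCast_eq_zero ?_⟩
  have := Submodule.mem_map_of_mem (f := ρ.toLinearMap) hx
  rw [Submodule.map_pow] at this
  replace := pow_le_pow_left' hρ (n + 1) this
  rw [← Submodule.restrictScalars_pow n.succ_ne_zero, pow_succ, hn, zero_mul] at this
  exact (Submodule.mem_bot _).1 this

end MonoidAlgebra

open MonoidAlgebra in
/-- For a finite `p`-group `P`, the intersection of all powers of the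
augmentation ideal of `ℤ[P]` is zero. -/
theorem iInf_pow_augmentationIdeal_int_groupRing_of_pGroup_eq_bot
    {p : ℕ} (hp : p.Prime) (P : Type*) [Group P] [Finite P]
    (hP : IsPGroup p P) :
    ⨅ n : ℕ,
      (Submodule.restrictScalars ℤ
        (RingHom.ker ((MonoidAlgebra.lift ℤ ℤ P) 1 : MonoidAlgebra ℤ P →ₐ[ℤ] ℤ))) ^ n
      = ⊥ := by
  have : Fact p.Prime := ⟨hp⟩
  change ⨅ n : ℕ, augmentationIdeal ℤ P ^ n = ⊥
  obtain ⟨n, hn⟩ := exists_augmentationIdeal_int_pow_le_smul_top hP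
  have hp_ne_top : Ideal.span {(p : ℤ)} ≠ ⊤ := by
    rw [Ne, Ideal.span_singleton_eq_top]
    exact (Nat.prime_iff_prime_int.1 hp).not_isUnit
  refine eq_bot_iff.2 <| (le_iInf fun j => ?_).trans
    (Ideal.iInf_pow_smul_eq_bot_of_isTorsionFree (M := MonoidAlgebra ℤ P) _ hp_ne_top).le
  calc ⨅ i, augmentationIdeal ℤ P ^ i
      ≤ (augmentationIdeal ℤ P ^ n) ^ j := by
        rw [← pow_mul]
        exact iInf_le _ _
    _ ≤ ((p : ℤ) • ⊤) ^ j := pow_le_pow_left' hn j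
    _ = (p : ℤ) ^ j • ⊤ ^ j := smul_pow ..
    _ ≤ (p : ℤ) ^ j • ⊤ := smul_le_smul_left _ le_top
    _ = Ideal.span {(p : ℤ)} ^ j • ⊤ := by
        rw [Ideal.span_singleton_pow, Submodule.ideal_span_singleton_smul]
end

section
/- For a cyclic group H of order pq with p, q distinct primes and generator h, the ideal of ℤ[H] generated by φ₁(h)·φ_p(h)·φ_q(h) (product of cyclotomic polynomials evaluated at h) satisfies I_H · J = J, where I_H is the augmentation ideal. -/
/-!
Since `Φ₁ Φ_p Φ_q Φ_{pq} = X^{pq} - 1` vanishes at `h`, the element `u = 1 - Φ_{pq}(h)`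
satisfies `u · g = g` for the generator `g = (Φ₁ Φ_p Φ_q)(h)` of `J`. Its augmentation is
`1 - Φ_{pq}(1)`, which is `0` because `pq` is not a prime power, so `u ∈ I_H` and `g ∈ I_H J`.
-/

open Polynomial

theorem Ideal.mul_span_singleton_eq_self_of_mem {R : Type*} [CommSemiring R] {I : Ideal R}
    {u g : R} (hu : u ∈ I) (hug : u * g = g) : I * Ideal.span {g} = Ideal.span {g} := by
  refine le_antisymm Ideal.mul_le_right ?_
  rw [Ideal.span_singleton_le_iff_mem]
  simpa only [hug] using Ideal.mul_mem_mul hu (Ideal.mem_span_singleton_self g)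

theorem Nat.Prime.pow_ne_mul_of_ne {p q r : ℕ} (hp : p.Prime) (hq : q.Prime) (hpq : p ≠ q)
    (hr : r.Prime) (k : ℕ) : r ^ k ≠ p * q := by
  intro h
  have hpr : p = r :=
    (Nat.prime_dvd_prime_iff_eq hp hr).1 (hp.dvd_of_dvd_pow (h ▸ dvd_mul_right p q))
  have hqr : q = r :=
    (Nat.prime_dvd_prime_iff_eq hq hr).1 (hq.dvd_of_dvd_pow (h ▸ dvd_mul_left q p))
  exact hpq (hpr.trans hqr.symm)

theorem Polynomial.cyclotomic_one_mul_cyclotomic_mul_cyclotomic_mul_cyclotomic_mul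
    (R : Type*) [CommRing R] {p q : ℕ} (hp : p.Prime) (hq : q.Prime) (hpq : p ≠ q) :
    cyclotomic 1 R * cyclotomic p R * cyclotomic q R * cyclotomic (p * q) R =
      X ^ (p * q) - 1 := by
  have := Fact.mk hp; have := Fact.mk hq
  -- substitute `X ^ p` into `Φ_q (X - 1) = X ^ q - 1`; as `p ∤ q`, `Φ_q(X ^ p) = Φ_{qp} Φ_q`
  have hexp := congrArg (expand R p) (cyclotomic_prime_mul_X_sub_one R q)
  rw [map_mul,
    cyclotomic_expand_eq_cyclotomic_mul hp (hpq ∘ (Nat.prime_dvd_prime_iff_eq hp hq).1)] at hexp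
  simp only [map_sub, map_pow, expand_X, map_one, ← cyclotomic_prime_mul_X_sub_one R p,
    ← pow_mul] at hexp
  rw [cyclotomic_one, ← hexp, mul_comm q p]
  ring

theorem MonoidAlgebra.lift_one_aeval_of {k G : Type*} [CommSemiring k] [Monoid G] (g : G)
    (P : k[X]) : MonoidAlgebra.lift k k G 1 (aeval (of k G g) P) = P.eval 1 := by
  rw [← aeval_algHom_apply, lift_of, MonoidHom.one_apply, coe_aeval_eq_eval]

theorem augmentationIdeal_mul_cyclotomic_ideal_eq_self_general
    {p q : ℕ} (hp : p.Prime) (hq : q.Prime) (hpq : p ≠ q)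
    {H : Type*} [CommGroup H] [Fintype H] (h : H)
    (hcard : Fintype.card H = p * q) :
    RingHom.ker ((MonoidAlgebra.lift ℤ ℤ H) 1 : MonoidAlgebra ℤ H →ₐ[ℤ] ℤ) *
      Ideal.span {Polynomial.aeval (MonoidAlgebra.of ℤ H h)
        (Polynomial.cyclotomic 1 ℤ * Polynomial.cyclotomic p ℤ * Polynomial.cyclotomic q ℤ)}
    = Ideal.span {Polynomial.aeval (MonoidAlgebra.of ℤ H h)
        (Polynomial.cyclotomic 1 ℤ * Polynomial.cyclotomic p ℤ * Polynomial.cyclotomic q ℤ)} := by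
  set x := MonoidAlgebra.of ℤ H h
  have hx : x ^ (p * q) = 1 := by
    rw [← map_pow, ← hcard, pow_card_eq_one, MonoidAlgebra.of_apply, MonoidAlgebra.one_def]
  refine Ideal.mul_span_singleton_eq_self_of_mem (u := 1 - aeval x (cyclotomic (p * q) ℤ)) ?_ ?_
  · rw [RingHom.mem_ker, map_sub, map_one, MonoidAlgebra.lift_one_aeval_of,
      eval_one_cyclotomic_not_prime_pow fun hr k ↦ Nat.Prime.pow_ne_mul_of_ne hp hq hpq hr k,
      sub_self]
  · rw [sub_mul, one_mul, sub_eq_self, ← map_mul, mul_comm,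
      cyclotomic_one_mul_cyclotomic_mul_cyclotomic_mul_cyclotomic_mul ℤ hp hq hpq,
      map_sub, map_pow, aeval_X, hx, map_one, sub_self]

/-- For a cyclic group `H` of order `p * q` (`p ≠ q` primes) generated by `h`,
the ideal `J` of `ℤ[H]` generated by `φ₁(h) · φ_p(h) · φ_q(h)` satisfies
`I_H · J = J`, where `I_H` is the augmentation ideal. -/
theorem augmentationIdeal_mul_cyclotomic_ideal_eq_self
    {p q : ℕ} (hp : p.Prime) (hq : q.Prime) (hpq : p ≠ q)
    {H : Type*} [CommGroup H] [Fintype H] (h : H)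
    (hgen : ∀ x : H, x ∈ Subgroup.zpowers h) (hcard : Fintype.card H = p * q) :
    RingHom.ker ((MonoidAlgebra.lift ℤ ℤ H) 1 : MonoidAlgebra ℤ H →ₐ[ℤ] ℤ) *
      Ideal.span {Polynomial.aeval (MonoidAlgebra.of ℤ H h)
        (Polynomial.cyclotomic 1 ℤ * Polynomial.cyclotomic p ℤ * Polynomial.cyclotomic q ℤ)}
    = Ideal.span {Polynomial.aeval (MonoidAlgebra.of ℤ H h)
        (Polynomial.cyclotomic 1 ℤ * Polynomial.cyclotomic p ℤ * Polynomial.cyclotomic q ℤ)} :=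
  augmentationIdeal_mul_cyclotomic_ideal_eq_self_general hp hq hpq h hcard
end

section
/- In ℤ_p[x]/(x^q − 1) with p, q distinct primes, the ideal generated by (x − 1) equals the ideal generated by (x − 1)^k for every k ≥ 1. -/
/-!
Write `x ^ q - 1 = (x - 1) * g` with `g = 1 + x + ⋯ + x ^ (q - 1)`. Since `g(1) = q` is a unit
in `𝔽_p`, the polynomials `x - 1` and `g` are coprime, so in the quotient the image `t` of
`x - 1` satisfies `u * t + v * g = 1` and `t * g = 0`. Multiplying the first identity by `t`
gives `t = u * t ^ 2`, so `(t)` is an idempotent ideal and `(t ^ k) = (t) ^ k = (t)`.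
-/

open Polynomial

theorem Polynomial.isCoprime_X_sub_C_of_isUnit_eval {R : Type*} [CommRing R] {f : R[X]} {a : R}
    (h : IsUnit (f.eval a)) : IsCoprime (X - C a) f := by
  obtain ⟨b, hb⟩ := h.exists_left_inv
  have hf : C (f.eval a) = f - (X - C a) * (f /ₘ (X - C a)) := by
    rw [← modByMonic_X_sub_C_eq_C_eval, eq_sub_iff_add_eq, modByMonic_add_div]
  have hb' : C b * C (f.eval a) = 1 := by rw [← C_mul, hb, C_1]
  exact ⟨-C b * (f /ₘ (X - C a)), C b, by linear_combination (-C b) * hf + hb'⟩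

theorem sq_dvd_of_isCoprime_of_mul_eq_zero {R : Type*} [CommSemiring R] {a b : R}
    (h : IsCoprime a b) (hab : a * b = 0) : a ^ 2 ∣ a := by
  obtain ⟨u, v, huv⟩ := h
  refine ⟨u, ?_⟩
  calc a = a * (u * a + v * b) := by rw [huv, mul_one]
    _ = a ^ 2 * u + v * (a * b) := by ring
    _ = a ^ 2 * u := by rw [hab, mul_zero, add_zero]

theorem Ideal.isIdempotentElem_span_singleton_of_sq_dvd {R : Type*} [CommSemiring R] {a : R}
    (h : a ^ 2 ∣ a) : IsIdempotentElem (Ideal.span {a}) := by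
  rw [IsIdempotentElem, Ideal.span_singleton_mul_span_singleton, ← sq]
  exact le_antisymm (Ideal.span_singleton_le_span_singleton.mpr (dvd_pow_self a two_ne_zero))
    (Ideal.span_singleton_le_span_singleton.mpr h)

theorem Ideal.span_singleton_pow_eq_of_isCoprime_of_mul_eq_zero {R : Type*} [CommSemiring R]
    {a b : R} (h : IsCoprime a b) (hab : a * b = 0) {k : ℕ} (hk : k ≠ 0) :
    Ideal.span {a ^ k} = Ideal.span {a} := by
  rw [← Ideal.span_singleton_pow]
  exact (Ideal.isIdempotentElem_span_singleton_of_sq_dvd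
    (sq_dvd_of_isCoprime_of_mul_eq_zero h hab)).pow_eq hk

/-- In `𝔽_p[x]/(x^q − 1)` with `p, q` distinct primes, the ideal generated by
`x − 1` equals the ideal generated by `(x − 1)^k` for every `k ≥ 1`. -/
theorem span_X_sub_one_eq_span_pow_in_quotient
    {p q : ℕ} (hp : p.Prime) (hq : q.Prime) (hpq : p ≠ q) (k : ℕ) (hk : 1 ≤ k) :
    Ideal.span {Ideal.Quotient.mk
        (Ideal.span {(Polynomial.X : Polynomial (ZMod p)) ^ q - 1}) (Polynomial.X - 1)} =
      Ideal.span {(Ideal.Quotient.mk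
        (Ideal.span {(Polynomial.X : Polynomial (ZMod p)) ^ q - 1}) (Polynomial.X - 1)) ^ k} := by
  have := Fact.mk hp
  set π := Ideal.Quotient.mk (Ideal.span {(X : (ZMod p)[X]) ^ q - 1})
  set g : (ZMod p)[X] := ∑ i ∈ Finset.range q, X ^ i
  have hg_eval : IsUnit (g.eval 1) := by
    simp only [g, eval_geom_sum, one_pow, Finset.sum_const, Finset.card_range, nsmul_one]
    refine Ne.isUnit ?_
    rw [Ne, ZMod.natCast_eq_zero_iff]
    exact fun h ↦ hpq ((Nat.prime_dvd_prime_iff_eq hp hq).mp h)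
  have hcop : IsCoprime (π (X - 1)) (π g) := by
    simpa using (isCoprime_X_sub_C_of_isUnit_eval hg_eval).map π
  have hmul : π (X - 1) * π g = 0 := by
    rw [← map_mul, mul_geom_sum]
    exact Ideal.Quotient.mk_singleton_self _
  exact (Ideal.span_singleton_pow_eq_of_isCoprime_of_mul_eq_zero hcop hmul (Nat.one_le_iff_ne_zero.mp hk)).symm
end

section
/- For a Laurent polynomial ring ℤ[t^{±1}] and a finite abelian group M, the ℤ[t^{±1}]-module ℤ[t^{±1}] ⊗_ℤ M satisfies ⋂_{k≥0} (t−1)^k·(ℤ[t^{±1}] ⊗ M) = 0. -/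
/-!
Identify `ℤ[t^{±1}] ⊗_ℤ M` with the finitely supported sequences `ℤ →₀ M`, on which `t` acts by
shifting. Multiplication by `t - 1` maps `f` to `j ↦ f (j - 1) - f j`, which keeps the lowest
nonzero coefficient in place and moves the highest one up by one, so the support of `(t - 1)^k • y`
is at least `k` wider than that of a nonzero `y`. An element divisible by every power of `t - 1`
therefore has empty support.
-/

open LaurentPolynomial TensorProduct

theorem Finsupp.support_subset_Icc_of_forall_eq_sub_shift {M : Type*} [AddCommGroup M]
    {f g : ℤ →₀ M} (hg : ∀ j, g j = f (j - 1) - f j) {a b : ℤ}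
    (h : ↑g.support ⊆ Set.Icc a b) : ↑f.support ⊆ Set.Icc a (b - 1) := by
  intro j hj
  have hne : f.support.Nonempty := ⟨j, hj⟩
  set i := f.support.min' hne
  set l := f.support.max' hne
  have hi : f i ≠ 0 := Finsupp.mem_support_iff.1 (f.support.min'_mem hne)
  have hl : f l ≠ 0 := Finsupp.mem_support_iff.1 (f.support.max'_mem hne)
  have hbelow : f (i - 1) = 0 :=
    Finsupp.notMem_support_iff.1 fun h' ↦ (f.support.min'_le _ h').not_gt (by omega)
  have habove : f (l + 1) = 0 :=
    Finsupp.notMem_support_iff.1 fun h' ↦ (f.support.le_max' _ h').not_gt (by omega)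
  have hai : a ≤ i := (h <| Finsupp.mem_support_iff.2 <| by simpa [hg, hbelow] using hi).1
  have hlb : l + 1 ≤ b := (h <| Finsupp.mem_support_iff.2 <| by simpa [hg, habove] using hl).2
  exact ⟨hai.trans (f.support.min'_le j hj), by linarith [f.support.le_max' j hj]⟩

theorem Submodule.mem_ideal_span_singleton_pow_smul_top_iff {R M : Type*} [CommRing R]
    [AddCommGroup M] [Module R M] (r : R) (k : ℕ) (x : M) :
    x ∈ Ideal.span {r} ^ k • (⊤ : Submodule R M) ↔ ∃ y, r ^ k • y = x := by
  rw [Ideal.span_singleton_pow, Submodule.ideal_span_singleton_smul,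
    Submodule.mem_smul_pointwise_iff_exists]
  simp

namespace LaurentPolynomial

variable {R M : Type*} [CommRing R] [AddCommGroup M] [Module R M]

variable (R M) in
noncomputable def tensorEquivFinsupp : R[T;T⁻¹] ⊗[R] M ≃ₗ[R] (ℤ →₀ M) :=
  (TensorProduct.congr (AddMonoidAlgebra.coeffLinearEquiv R) (LinearEquiv.refl R M)).trans
    (finsuppScalarLeft R M ℤ)

theorem tensorEquivFinsupp_tmul (f : R[T;T⁻¹]) (m : M) (j : ℤ) :
    tensorEquivFinsupp R M (f ⊗ₜ m) j = f.coeff j • m :=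
  finsuppScalarLeft_apply_tmul_apply _ _ _

theorem tensorEquivFinsupp_T_smul (n : ℤ) (z : R[T;T⁻¹] ⊗[R] M) (j : ℤ) :
    tensorEquivFinsupp R M ((T n : R[T;T⁻¹]) • z) j = tensorEquivFinsupp R M z (j - n) := by
  induction z using TensorProduct.induction_on with
  | zero => simp
  | tmul f m =>
    rw [smul_tmul', smul_eq_mul, tensorEquivFinsupp_tmul, tensorEquivFinsupp_tmul]
    congr 1
    show (AddMonoidAlgebra.single n (1 : R) * f).coeff j = _
    rw [AddMonoidAlgebra.coeff_single_mul_apply]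
    simp [sub_eq_neg_add]
  | add x y hx hy => simp only [smul_add, map_add, Finsupp.add_apply, hx, hy]

theorem tensorEquivFinsupp_T_sub_one_smul (z : R[T;T⁻¹] ⊗[R] M) (j : ℤ) :
    tensorEquivFinsupp R M ((T 1 - 1 : R[T;T⁻¹]) • z) j =
      tensorEquivFinsupp R M z (j - 1) - tensorEquivFinsupp R M z j := by
  rw [sub_smul (T 1) 1 z, one_smul, map_sub, Finsupp.sub_apply, tensorEquivFinsupp_T_smul]

theorem support_tensorEquivFinsupp_subset_Icc_of_T_sub_one_pow_smul {k : ℕ}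
    {y : R[T;T⁻¹] ⊗[R] M} {a b : ℤ}
    (h : ↑(tensorEquivFinsupp R M ((T 1 - 1 : R[T;T⁻¹]) ^ k • y)).support ⊆ Set.Icc a b) :
    ↑(tensorEquivFinsupp R M y).support ⊆ Set.Icc a (b - k) := by
  induction k generalizing y with
  | zero => simpa using h
  | succ k ih =>
    rw [pow_succ, mul_smul] at h
    have := Finsupp.support_subset_Icc_of_forall_eq_sub_shift
      (tensorEquivFinsupp_T_sub_one_smul y) (ih h)
    rwa [Nat.cast_succ, ← sub_sub]

end LaurentPolynomial

theorem iInf_t_sub_one_pow_smul_laurent_tensor_finite_eq_bot_general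
    {M : Type*} [AddCommGroup M] :
    (⨅ k : ℕ,
      (Ideal.span {(LaurentPolynomial.T 1 - 1 : LaurentPolynomial ℤ)}) ^ k •
        (⊤ : Submodule (LaurentPolynomial ℤ)
          (TensorProduct ℤ (LaurentPolynomial ℤ) M))) = ⊥ := by
  refine eq_bot_iff.2 fun x hx ↦ ?_
  obtain ⟨a, b, hab⟩ := bddBelow_bddAbove_iff_subset_Icc.1
    ⟨(tensorEquivFinsupp ℤ M x).support.bddBelow, (tensorEquivFinsupp ℤ M x).support.bddAbove⟩
  obtain ⟨y, rfl⟩ := (Submodule.mem_ideal_span_singleton_pow_smul_top_iff _ _ _).1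
    (Submodule.mem_iInf _ |>.1 hx (b - a + 1).toNat)
  have hy : ↑(tensorEquivFinsupp ℤ M y).support ⊆ Set.Icc a (b - (b - a + 1).toNat) :=
    support_tensorEquivFinsupp_subset_Icc_of_T_sub_one_pow_smul hab
  rw [Set.Icc_eq_empty (by omega), Set.subset_empty_iff, Finset.coe_eq_empty,
    Finsupp.support_eq_empty, LinearEquiv.map_eq_zero_iff] at hy
  simp [hy]

/-- For a finite abelian group `M`, the `ℤ[t^{±1}]`-module `ℤ[t^{±1}] ⊗_ℤ M`
satisfies `⋂_k (t − 1)^k · (ℤ[t^{±1}] ⊗ M) = 0`. -/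
theorem iInf_t_sub_one_pow_smul_laurent_tensor_finite_eq_bot
    {M : Type*} [AddCommGroup M] [Finite M] :
    (⨅ k : ℕ,
      (Ideal.span {(LaurentPolynomial.T 1 - 1 : LaurentPolynomial ℤ)}) ^ k •
        (⊤ : Submodule (LaurentPolynomial ℤ)
          (TensorProduct ℤ (LaurentPolynomial ℤ) M))) = ⊥ :=
  iInf_t_sub_one_pow_smul_laurent_tensor_finite_eq_bot_general
end

section
/- Let p, q be distinct primes. In the group ring ℤ[H] of a finite cyclic group H of order pq with generator h, multiplication by (h − 1) is injective on the ideal J generated by φ₁(h)φ_p(h)φ_q(h), and is surjective onto J. -/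
open Polynomial


/-- In the group ring `ℤ[H]` of a cyclic group `H` of order `p·q` (`p ≠ q`
primes) with generator `h`, multiplication by `h − 1` is a bijection of the
ideal `J` generated by `φ₁(h)·φ_p(h)·φ_q(h)` onto itself. -/
theorem mul_h_sub_one_bijOn_cyclotomic_ideal
    {p q : ℕ} (hp : p.Prime) (hq : q.Prime) (hpq : p ≠ q)
    {H : Type*} [CommGroup H] [Fintype H] (h : H)
    (hgen : ∀ x : H, x ∈ Subgroup.zpowers h) (hcard : Fintype.card H = p * q) :
    Set.BijOn (fun ξ => (MonoidAlgebra.of ℤ H h - 1) * ξ)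
      (Ideal.span {Polynomial.aeval (MonoidAlgebra.of ℤ H h)
        ((Polynomial.X - 1) * Polynomial.cyclotomic p ℤ * Polynomial.cyclotomic q ℤ)} :
        Ideal (MonoidAlgebra ℤ H))
      (Ideal.span {Polynomial.aeval (MonoidAlgebra.of ℤ H h)
        ((Polynomial.X - 1) * Polynomial.cyclotomic p ℤ * Polynomial.cyclotomic q ℤ)} :
        Ideal (MonoidAlgebra ℤ H)) := by
  set t : MonoidAlgebra ℤ H := MonoidAlgebra.of ℤ H h with ht_def
  set g : MonoidAlgebra ℤ H :=
    Polynomial.aeval t ((X - 1) * cyclotomic p ℤ * cyclotomic q ℤ) with hg_def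
  set J : Ideal (MonoidAlgebra ℤ H) := Ideal.span {g} with hJ_def
  -- divisors of p*q
  have hdiv : (p*q).divisors = {1, p, q, p*q} := by
    rw [Nat.divisors_mul, hp.divisors, hq.divisors]
    ext x
    simp only [Finset.mem_mul, Finset.mem_insert, Finset.mem_singleton]
    constructor
    · rintro ⟨a, (rfl|rfl), b, (rfl|rfl), rfl⟩ <;> simp
    · rintro (rfl|h')
      · exact ⟨1, Or.inl rfl, 1, Or.inl rfl, rfl⟩
      rcases h' with h'|h'|h'
      exacts [⟨p, Or.inr rfl, 1, Or.inl rfl, by rw [mul_one, h']⟩,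
        ⟨1, Or.inl rfl, q, Or.inr rfl, by rw [one_mul, h']⟩,
        ⟨p, Or.inr rfl, q, Or.inr rfl, h'.symm⟩]
  -- polynomial factorization
  have hfact : (X - 1 : ℤ[X]) * cyclotomic p ℤ * cyclotomic q ℤ * cyclotomic (p*q) ℤ
      = X ^ (p*q) - 1 := by
    have h0 : 0 < p * q := Nat.mul_pos hp.pos hq.pos
    have hprod := prod_cyclotomic_eq_X_pow_sub_one h0 ℤ
    rw [hdiv] at hprod
    have h1p : (1:ℕ) ≠ p := hp.one_lt.ne
    have h1q : (1:ℕ) ≠ q := hq.one_lt.ne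
    have h1pq : (1:ℕ) ≠ p*q := (Nat.one_lt_mul_iff.mpr ⟨hp.pos, hq.pos, Or.inl hp.one_lt⟩).ne
    have hppq : p ≠ p*q := by nlinarith [hp.one_lt, hq.one_lt]
    have hqpq : q ≠ p*q := by nlinarith [hp.one_lt, hq.one_lt]
    rw [show ({1, p, q, p*q} : Finset ℕ) = insert 1 (insert p (insert q {p*q})) from rfl]
        at hprod
    rw [Finset.prod_insert (by simp [h1p, h1q, h1pq]),
        Finset.prod_insert (by simp [hpq, hppq]),
        Finset.prod_insert (by simp [hqpq]), Finset.prod_singleton, cyclotomic_one] at hprod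
    rw [← hprod]; ring
  -- t ^ (p*q) = 1
  have htpq : t ^ (p*q) = 1 := by
    rw [ht_def, ← map_pow, ← hcard, pow_card_eq_one, map_one]
  -- key: g * Φ_{pq}(t) = 0
  have hkey : g * Polynomial.aeval t (cyclotomic (p*q) ℤ) = 0 := by
    rw [hg_def, ← map_mul, hfact, map_sub, map_pow, aeval_X, map_one, htpq, sub_self]
  -- X - 1 divides cyclotomic (p*q) - 1
  have heval1 : (cyclotomic (p*q) ℤ).eval 1 = 1 := by
    refine eval_one_cyclotomic_not_prime_pow ?_
    intro r hr k hk
    have hpdvd : p ∣ r ^ k := hk ▸ Dvd.intro q rfl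
    have hqdvd : q ∣ r ^ k := hk ▸ Dvd.intro_left p rfl
    have h1 : p = r := (Nat.prime_dvd_prime_iff_eq hp hr).mp (hp.dvd_of_dvd_pow hpdvd)
    have h2 : q = r := (Nat.prime_dvd_prime_iff_eq hq hr).mp (hq.dvd_of_dvd_pow hqdvd)
    exact hpq (h1.trans h2.symm)
  have hdvd : (X - 1 : ℤ[X]) ∣ cyclotomic (p*q) ℤ - 1 := by
    have : (X - C (1:ℤ)) ∣ cyclotomic (p*q) ℤ - 1 := by
      rw [dvd_iff_isRoot]
      simp [IsRoot, heval1]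
    simpa using this
  obtain ⟨w, hw⟩ := hdvd
  -- inverse relation: for ξ ∈ J, (t-1) * (-(aeval t w) * ξ) = ξ
  have hinv : ∀ ξ ∈ J, (t - 1) * (-(Polynomial.aeval t w) * ξ) = ξ := by
    intro ξ hξ
    rw [Ideal.mem_span_singleton] at hξ
    obtain ⟨c, rfl⟩ := hξ
    have hwt : (t - 1) * Polynomial.aeval t w
        = Polynomial.aeval t (cyclotomic (p*q) ℤ) - 1 := by
      have := congrArg (Polynomial.aeval t) hw
      rw [map_mul, map_sub, map_sub, aeval_X, map_one] at this
      rw [← this]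
    calc (t - 1) * (-(Polynomial.aeval t w) * (g * c))
        = -(((t - 1) * Polynomial.aeval t w) * (g * c)) := by ring
      _ = -((Polynomial.aeval t (cyclotomic (p*q) ℤ) - 1) * (g * c)) := by rw [hwt]
      _ = -((g * Polynomial.aeval t (cyclotomic (p*q) ℤ)) * c) + g * c := by ring
      _ = g * c := by rw [hkey]; ring
  -- membership is preserved by multiplication
  have hmaps : ∀ a : MonoidAlgebra ℤ H, ∀ ξ ∈ J, a * ξ ∈ J := fun a ξ hξ =>
    J.mul_mem_left a hξ
  refine ⟨fun ξ hξ => hmaps _ ξ hξ, ?_, ?_⟩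
  · intro ξ₁ h₁ ξ₂ h₂ he
    simp only at he
    calc ξ₁ = (t - 1) * (-(Polynomial.aeval t w) * ξ₁) := (hinv ξ₁ h₁).symm
      _ = -(Polynomial.aeval t w) * ((t - 1) * ξ₁) := by ring
      _ = -(Polynomial.aeval t w) * ((t - 1) * ξ₂) := by rw [he]
      _ = (t - 1) * (-(Polynomial.aeval t w) * ξ₂) := by ring
      _ = ξ₂ := hinv ξ₂ h₂
  · intro η hη
    refine ⟨-(Polynomial.aeval t w) * η, hmaps _ η hη, ?_⟩
    exact hinv η hη
end
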